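/- arXiv:2104.01564 — 5 statements merged into one kernel-verified Lean document; each statement's English description precedes it below -/
import Mathlib

section
/- There exists a constant C' such that for all n ≥ 2 and any C-log-sparse sets S₁, ..., Sₙ of positive integers, every arithmetic progression contained in the sumset S₁ + ⋯ + Sₙ has length at most n^{C'·n}. -/
/-- A set of positive integers is `C`-log-sparse if every dyadic interval `[x, 2x)`
contains at most `C` of its elements. -/
def LogSparse (C : ℕ) (T : Set ℕ) : Prop :=
  (∀ t ∈ T, 0 < t) ∧ ∀ x : ℕ, 0 < x → (T ∩ Set.Ico x (2 * x)).ncard ≤ C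

/-- The sumset `S 0 + S 1 + ⋯ + S (n-1)`. -/
def sumSet {n : ℕ} (S : Fin n → Set ℕ) : Set ℕ :=
  {s | ∃ x : Fin n → ℕ, (∀ i, x i ∈ S i) ∧ ∑ i, x i = s}

/-- The arithmetic progression `{a, a+d, …, a+(k-1)d}` of length `k`. -/
def AP (a d k : ℕ) : Set ℕ := {m | ∃ i < k, m = a + i * d}

/-!
Split an AP of length `k` into halves. An element `s` of the upper half `[a', 2a']` of an
`(n+1)`-fold sumset has a summand `x ≥ s/(n+1)`. Such `x` lie in a window of ratio `2(n+1)`, so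
log-sparseness leaves `O(C log n)` choices for each index, and `s - x` lies in an `n`-fold
sumset and in a translate of an AP of length `k`. The resulting recursion
`f_{n+1}(k) ≤ f_{n+1}(k/2) + W f_n(k)`, with `W = 2C(n+1)²`, gives
`f_n(k) ≤ (2Cn² (log₂ k + 2))ⁿ` for the number of sumset elements in an AP of length `k`.
An AP inside the sumset thus has `k ≤ (w (log₂ k + 2))ⁿ`, which self-improves to
`k ≤ (8nw)²ⁿ`.
-/

lemma Set.ncard_biUnion_le_ncard_mul {ι α : Type*} {t : Set ι} (ht : t.Finite)
    {s : ι → Set α} {q : ℕ} (hs : ∀ i ∈ t, (s i).ncard ≤ q) :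
    (⋃ i ∈ t, s i).ncard ≤ t.ncard * q := by
  lift t to Finset ι using ht
  calc (⋃ i ∈ (t : Set ι), s i).ncard ≤ ∑ i ∈ t, (s i).ncard := by
        simpa using t.set_ncard_biUnion_le s
    _ ≤ t.card • q := Finset.sum_le_card_nsmul _ _ _ fun i hi => hs i hi
    _ = (t : Set ι).ncard * q := by rw [Set.ncard_coe_finset, smul_eq_mul]

lemma pow_succ_add_mul_pow_le (a w n : ℕ) : a ^ (n + 1) + w * (a + w) ^ n ≤ (a + w) ^ (n + 1) :=
  calc a ^ (n + 1) + w * (a + w) ^ n ≤ a * (a + w) ^ n + w * (a + w) ^ n := by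
        rw [pow_succ']; gcongr; omega
    _ = (a + w) ^ (n + 1) := by ring

lemma add_two_pow_le_mul_two_pow (m : ℕ) {j : ℕ} (hj : 0 < j) :
    (m + 2) ^ j ≤ (4 * j) ^ j * 2 ^ m := by
  set q := m / (2 * j)
  have hm : m < 2 * j * (q + 1) := Nat.lt_mul_div_succ m (by omega)
  have hq : q + 2 ≤ 2 ^ (q + 1) := Nat.lt_two_pow_self
  have hqm : q * j ≤ m := by
    have : q * (2 * j) ≤ m := Nat.div_mul_le_self m (2 * j)
    nlinarith
  calc (m + 2) ^ j ≤ (4 * j * 2 ^ q) ^ j := by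
        gcongr
        calc m + 2 ≤ 2 * j * (q + 2) := by nlinarith
          _ ≤ 2 * j * 2 ^ (q + 1) := by gcongr
          _ = 4 * j * 2 ^ q := by ring
    _ = (4 * j) ^ j * 2 ^ (q * j) := by rw [mul_pow, ← pow_mul]
    _ ≤ (4 * j) ^ j * 2 ^ m := by gcongr; omega

lemma le_pow_of_le_mul_log_add_two_pow {k w j : ℕ} (hj : 0 < j)
    (h : k ≤ (w * (Nat.log 2 k + 2)) ^ j) : k ≤ (8 * j * w) ^ (2 * j) := by
  rcases Nat.eq_zero_or_pos k with rfl | hk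
  · exact Nat.zero_le _
  refine Nat.le_of_mul_le_mul_right ?_ hk
  calc k * k ≤ (w * (Nat.log 2 k + 2)) ^ j * (w * (Nat.log 2 k + 2)) ^ j := Nat.mul_le_mul h h
    _ = w ^ (2 * j) * (Nat.log 2 k + 2) ^ (2 * j) := by rw [← pow_add, ← two_mul, mul_pow]
    _ ≤ w ^ (2 * j) * ((4 * (2 * j)) ^ (2 * j) * 2 ^ Nat.log 2 k) := by
        gcongr; exact add_two_pow_le_mul_two_pow _ (by omega)
    _ ≤ w ^ (2 * j) * ((4 * (2 * j)) ^ (2 * j) * k) := by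
        gcongr; exact Nat.pow_log_le_self 2 hk.ne'
    _ = (8 * j * w) ^ (2 * j) * k := by ring

namespace LogSparse

variable {C : ℕ} {T : Set ℕ}

lemma ncard_inter_Ico_le (hT : LogSparse C T) (u m : ℕ) :
    (T ∩ Set.Ico u (2 ^ m * u)).ncard ≤ C * m := by
  rcases Nat.eq_zero_or_pos u with rfl | hu
  · simp
  induction m with
  | zero => simp
  | succ m ih =>
    set v := 2 ^ m * u
    have hsplit : Set.Ico u (2 ^ (m + 1) * u) = Set.Ico u v ∪ Set.Ico v (2 * v) := by
      rw [Set.Ico_union_Ico_eq_Ico (Nat.le_mul_of_pos_left u (by positivity)) (by omega),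
        pow_succ', mul_assoc]
    calc (T ∩ Set.Ico u (2 ^ (m + 1) * u)).ncard
        ≤ (T ∩ Set.Ico u v).ncard + (T ∩ Set.Ico v (2 * v)).ncard := by
          rw [hsplit, Set.inter_union_distrib_left]; exact Set.ncard_union_le _ _
      _ ≤ C * m + C := add_le_add ih (hT.2 _ (by positivity))
      _ = C * (m + 1) := by ring

lemma ncard_le_of_forall_le_mul (hT : LogSparse C T) {A : Set ℕ} (hAT : A ⊆ T) {m : ℕ}
    (hA : ∀ x ∈ A, ∀ y ∈ A, x ≤ m * y) : A.ncard ≤ C * (Nat.log 2 m + 1) := by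
  rcases A.eq_empty_or_nonempty with rfl | hne
  · simp
  have hu : sInf A ∈ A := Nat.sInf_mem hne
  have hu_pos : 0 < sInf A := hT.1 _ (hAT hu)
  have hsub : A ⊆ T ∩ Set.Ico (sInf A) (2 ^ (Nat.log 2 m + 1) * sInf A) := by
    intro x hx
    refine ⟨hAT hx, Nat.sInf_le hx, ?_⟩
    calc x ≤ m * sInf A := hA x hx _ hu
      _ < 2 ^ (Nat.log 2 m + 1) * sInf A := by
        gcongr; exact Nat.lt_pow_succ_log_self one_lt_two m
  exact (Set.ncard_le_ncard hsub ((Set.finite_Ico _ _).subset Set.inter_subset_right)).trans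
    (hT.ncard_inter_Ico_le _ _)

end LogSparse

lemma finite_AP (a d k : ℕ) : (AP a d k).Finite := by
  simpa [AP, Set.image, eq_comm] using (Set.finite_Iio k).image (fun i => a + i * d)

lemma ncard_AP (a k : ℕ) {d : ℕ} (hd : 0 < d) : (AP a d k).ncard = k := by
  have : AP a d k = (fun i => a + i * d) '' Set.Iio k := by
    ext m; simp [AP, eq_comm]
  rw [this, Set.ncard_image_of_injective _ fun i j h => by
    simpa [hd.ne'] using (Nat.add_left_cancel h : i * d = j * d), Set.ncard_Iio_nat]

lemma AP_union_AP (a d j m : ℕ) : AP a d j ∪ AP (a + j * d) d m = AP a d (j + m) := by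
  ext s
  constructor
  · rintro (⟨i, hi, rfl⟩ | ⟨i, hi, rfl⟩)
    · exact ⟨i, by omega, rfl⟩
    · exact ⟨j + i, by omega, by ring⟩
  · rintro ⟨i, hi, rfl⟩
    rcases lt_or_ge i j with hij | hij
    · exact Or.inl ⟨i, hij, rfl⟩
    · refine Or.inr ⟨i - j, by omega, ?_⟩
      rw [add_assoc, ← add_mul, Nat.add_sub_cancel' hij]

lemma AP_subset_Icc (a d k : ℕ) : AP a d k ⊆ Set.Icc a (a + (k - 1) * d) := by
  rintro s ⟨i, hi, rfl⟩
  exact ⟨by omega, by gcongr; omega⟩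

lemma exists_preimage_add_AP_subset_AP (x a : ℕ) {d : ℕ} (hd : 0 < d) (k : ℕ) :
    ∃ b, (x + ·) ⁻¹' AP a d k ⊆ AP b d k := by
  have hex : ∃ i, x ≤ a + i * d := ⟨x, by nlinarith⟩
  obtain ⟨i₀, hi₀, hmin⟩ : ∃ i₀, x ≤ a + i₀ * d ∧ ∀ i, x ≤ a + i * d → i₀ ≤ i :=
    ⟨Nat.find hex, Nat.find_spec hex, fun i => Nat.find_min' hex⟩
  refine ⟨a + i₀ * d - x, fun r ⟨i, hi, hr⟩ => ?_⟩
  have hr : x + r = a + i * d := hr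
  have hi₀i : i₀ ≤ i := hmin i (by omega)
  have hsub : (i - i₀) * d = i * d - i₀ * d := Nat.sub_mul _ _ _
  have hle : i₀ * d ≤ i * d := by gcongr
  exact ⟨i - i₀, by omega, by omega⟩

lemma exists_le_mul_summand_of_mem_sumSet {n : ℕ} {S : Fin (n + 1) → Set ℕ} {s : ℕ}
    (hs : s ∈ sumSet S) :
    ∃ j, ∃ x ∈ S j, s ≤ (n + 1) * x ∧ ∃ r ∈ sumSet (S ∘ j.succAbove), x + r = s := by
  obtain ⟨y, hy, rfl⟩ := hs
  obtain ⟨j, -, hmax⟩ := Finset.exists_max_image Finset.univ y Finset.univ_nonempty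
  refine ⟨j, y j, hy j, ?_, _, ⟨fun i => y (j.succAbove i), fun i => hy _, rfl⟩,
    (Fin.sum_univ_succAbove y j).symm⟩
  simpa using Finset.sum_le_card_nsmul Finset.univ y (y j) fun i _ => hmax i (Finset.mem_univ _)

lemma ncard_sumSet_inter_le_of_subset_Icc {C n a Q : ℕ} {S : Fin (n + 1) → Set ℕ}
    (hS : ∀ i, LogSparse C (S i)) {P : Set ℕ} (hP : P ⊆ Set.Icc a (2 * a))
    (hQ : ∀ (j : Fin (n + 1)) (x : ℕ),
      (sumSet (S ∘ j.succAbove) ∩ (x + ·) ⁻¹' P).ncard ≤ Q) :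
    (sumSet S ∩ P).ncard ≤ (n + 1) * (C * (Nat.log 2 (2 * (n + 1)) + 1)) * Q := by
  let A (j : Fin (n + 1)) : Set ℕ := S j ∩ {x | a ≤ (n + 1) * x ∧ x ≤ 2 * a}
  let piece (j : Fin (n + 1)) (x : ℕ) : Set ℕ :=
    (x + ·) '' (sumSet (S ∘ j.succAbove) ∩ (x + ·) ⁻¹' P)
  have hcover : sumSet S ∩ P ⊆ ⋃ j, ⋃ x ∈ A j, piece j x := by
    rintro s ⟨hs, hsP⟩
    obtain ⟨j, x, hx, hsx, r, hr, rfl⟩ := exists_le_mul_summand_of_mem_sumSet hs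
    have hs_Icc := hP hsP
    rw [Set.mem_Icc] at hs_Icc
    have hxA : x ∈ A j := ⟨hx, by omega, by omega⟩
    simp only [Set.mem_iUnion]
    exact ⟨j, x, hxA, r, ⟨hr, hsP⟩, rfl⟩
  have hpiece_sub : (⋃ j, ⋃ x ∈ A j, piece j x) ⊆ P :=
    Set.iUnion_subset fun j => Set.iUnion₂_subset fun x _ =>
      Set.image_subset_iff.2 fun _ hr => hr.2
  have hA_card : ∀ j, (A j).ncard ≤ C * (Nat.log 2 (2 * (n + 1)) + 1) := fun j =>
    (hS j).ncard_le_of_forall_le_mul Set.inter_subset_left fun x hx y hy => by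
      have := hx.2.2; have := hy.2.1
      have : 2 * (n + 1) * y = 2 * ((n + 1) * y) := by ring
      omega
  have hA_fin : ∀ j, (A j).Finite := fun j =>
    (Set.finite_Iic (2 * a)).subset fun x hx => hx.2.2
  calc (sumSet S ∩ P).ncard ≤ (⋃ j, ⋃ x ∈ A j, piece j x).ncard :=
        Set.ncard_le_ncard hcover ((Set.finite_Icc _ _).subset (hpiece_sub.trans hP))
    _ ≤ ∑ j, (⋃ x ∈ A j, piece j x).ncard := Set.ncard_iUnion_le_of_fintype _
    _ ≤ ∑ _j : Fin (n + 1), C * (Nat.log 2 (2 * (n + 1)) + 1) * Q := by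
        gcongr with j
        refine (Set.ncard_biUnion_le_ncard_mul (hA_fin j) fun x _ => ?_).trans
          (Nat.mul_le_mul_right Q (hA_card j))
        exact (Set.ncard_image_of_injective _ (add_right_injective x)).trans_le (hQ j x)
    _ = (n + 1) * (C * (Nat.log 2 (2 * (n + 1)) + 1)) * Q := by simp [mul_assoc]

lemma ncard_sumSet_inter_AP_le_of_mul_le {C n a d k Q : ℕ} {S : Fin (n + 1) → Set ℕ}
    (hS : ∀ i, LogSparse C (S i)) (hd : 0 < d) (hk : (k - 1) * d ≤ a)
    (hQ : ∀ S' : Fin n → Set ℕ, (∀ i, LogSparse C (S' i)) →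
      ∀ b, (sumSet S' ∩ AP b d k).ncard ≤ Q) :
    (sumSet S ∩ AP a d k).ncard ≤ (n + 1) * (C * (Nat.log 2 (2 * (n + 1)) + 1)) * Q := by
  refine ncard_sumSet_inter_le_of_subset_Icc hS ((AP_subset_Icc a d k).trans
    (Set.Icc_subset_Icc_right (by omega))) fun j x => ?_
  obtain ⟨b, hb⟩ := exists_preimage_add_AP_subset_AP x a hd k
  exact (Set.ncard_le_ncard (Set.inter_subset_inter_right _ hb)
    ((finite_AP b d k).subset Set.inter_subset_right)).trans (hQ _ (fun i => hS _) b)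

lemma ncard_sumSet_inter_AP_upper_half_le {C n a d k B : ℕ} {S : Fin (n + 1) → Set ℕ}
    (hS : ∀ i, LogSparse C (S i)) (hd : 0 < d)
    (hB : ∀ S' : Fin n → Set ℕ, (∀ i, LogSparse C (S' i)) →
      ∀ b, (sumSet S' ∩ AP b d (k - k / 2)).ncard ≤ B) :
    (sumSet S ∩ AP (a + k / 2 * d) d (k - k / 2)).ncard ≤ 2 * C * (n + 1) ^ 2 * B := by
  have hspan : (k - k / 2 - 1) * d ≤ a + k / 2 * d := by
    have := Nat.mul_le_mul_right d (show k - k / 2 - 1 ≤ k / 2 by omega)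
    omega
  have hwindow : (n + 1) * (C * (Nat.log 2 (2 * (n + 1)) + 1)) ≤ 2 * C * (n + 1) ^ 2 := by
    have : Nat.log 2 (2 * (n + 1)) < 2 * (n + 1) := Nat.log_lt_self 2 (by omega)
    calc (n + 1) * (C * (Nat.log 2 (2 * (n + 1)) + 1)) ≤ (n + 1) * (C * (2 * (n + 1))) := by
          gcongr; omega
      _ = 2 * C * (n + 1) ^ 2 := by ring
  exact (ncard_sumSet_inter_AP_le_of_mul_le hS hd hspan hB).trans
    (Nat.mul_le_mul_right _ hwindow)

theorem ncard_sumSet_inter_AP_le {C d : ℕ} (hd : 0 < d) (n : ℕ) :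
    ∀ S : Fin n → Set ℕ, (∀ i, LogSparse C (S i)) → ∀ a k,
      (sumSet S ∩ AP a d k).ncard ≤ (2 * C * n ^ 2 * (Nat.log 2 k + 2)) ^ n := by
  induction n with
  | zero =>
    intro S _ a k
    refine (Set.ncard_le_ncard (t := {0}) ?_ (Set.finite_singleton 0)).trans (by simp)
    rintro s ⟨⟨y, -, rfl⟩, -⟩
    simp
  | succ n ih =>
    intro S hS a k
    induction k using Nat.strong_induction_on generalizing a with
    | _ k ihk =>
    set W := 2 * C * (n + 1) ^ 2
    have hlower : (sumSet S ∩ AP a d (k / 2)).ncard ≤ (W * (Nat.log 2 k + 1)) ^ (n + 1) := by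
      rcases Nat.lt_or_ge k 2 with hk | hk
      · simp [AP, Nat.div_eq_of_lt hk]
      rw [Nat.log_of_one_lt_of_le one_lt_two hk]
      exact ihk (k / 2) (by omega) a
    have hupper : (sumSet S ∩ AP (a + k / 2 * d) d (k - k / 2)).ncard
        ≤ W * (W * (Nat.log 2 k + 2)) ^ n := by
      refine ncard_sumSet_inter_AP_upper_half_le hS hd fun S' hS' b => ?_
      have hW : 2 * C * n ^ 2 ≤ W := Nat.mul_le_mul_left _ (Nat.pow_le_pow_left n.le_succ 2)
      have hlog : Nat.log 2 (k - k / 2) ≤ Nat.log 2 k := Nat.log_mono_right (by omega)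
      exact (ih S' hS' b _).trans (by gcongr)
    calc (sumSet S ∩ AP a d k).ncard
        = (sumSet S ∩ AP a d (k / 2) ∪ sumSet S ∩ AP (a + k / 2 * d) d (k - k / 2)).ncard := by
          rw [← Set.inter_union_distrib_left, AP_union_AP,
            Nat.add_sub_cancel' (Nat.div_le_self k 2)]
      _ ≤ (W * (Nat.log 2 k + 1)) ^ (n + 1) + W * (W * (Nat.log 2 k + 2)) ^ n :=
          (Set.ncard_union_le _ _).trans (add_le_add hlower hupper)
      _ ≤ (W * (Nat.log 2 k + 2)) ^ (n + 1) := by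
          have := pow_succ_add_mul_pow_le (W * (Nat.log 2 k + 1)) W n
          rwa [show W * (Nat.log 2 k + 1) + W = W * (Nat.log 2 k + 2) by ring] at this

theorem ap_in_sumset_upper_general (C : ℕ) :
    ∃ C' : ℝ, ∀ n : ℕ, 2 ≤ n → ∀ S : Fin n → Set ℕ, (∀ i, LogSparse C (S i)) →
      ∀ a d k : ℕ, 1 ≤ d → AP a d k ⊆ sumSet S →
        (k : ℝ) ≤ (n : ℝ) ^ (C' * (n : ℝ)) := by
  refine ⟨2 * C + 14, fun n hn S hS a d k hd hAP => ?_⟩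
  have hcount := ncard_sumSet_inter_AP_le hd n S hS a k
  rw [Set.inter_eq_right.2 hAP, ncard_AP a k hd] at hcount
  have hk : k ≤ (16 * C * n ^ 3) ^ (2 * n) :=
    (le_pow_of_le_mul_log_add_two_pow (by omega) hcount).trans_eq (by ring)
  have hbase : 16 * C * n ^ 3 ≤ n ^ (C + 7) :=
    calc 16 * C * n ^ 3 ≤ 2 ^ 4 * 2 ^ C * n ^ 3 := by gcongr <;> simp [Nat.lt_two_pow_self.le]
      _ ≤ n ^ 4 * n ^ C * n ^ 3 := by gcongr
      _ = n ^ (C + 7) := by ring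
  calc (k : ℝ) ≤ ((n ^ ((2 * C + 14) * n) : ℕ) : ℝ) := by
        exact_mod_cast hk.trans ((Nat.pow_le_pow_left hbase _).trans_eq (by ring))
    _ = (n : ℝ) ^ ((2 * C + 14 : ℝ) * n) := by
        rw [Nat.cast_pow, ← Real.rpow_natCast]; push_cast; rfl

theorem ap_in_sumset_upper (C : ℕ) (hC : 0 < C) :
    ∃ C' : ℝ, ∀ n : ℕ, 2 ≤ n → ∀ S : Fin n → Set ℕ, (∀ i, LogSparse C (S i)) →
      ∀ a d k : ℕ, 1 ≤ d → AP a d k ⊆ sumSet S →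
        (k : ℝ) ≤ (n : ℝ) ^ (C' * (n : ℝ)) :=
  ap_in_sumset_upper_general C
end

section
/- For every fixed C ≥ 2, every arithmetic progression contained in the sumset S₁ + ⋯ + Sₙ of n C-log-sparse sets has length at most n^{(1+O(log log n / log n))·n}; more precisely, there is a constant K = K(C) such that the length is at most n^{n(1 + log log n / log n + K/log n)} for all n ≥ 3. -/
/-!
Distinct terms of the progression have distinct representations `∑ yᵢ` with `yᵢ ∈ Sᵢ`, so `k`
is at most the number of such tuples `y` with sum in the progression. More generally, tuples
with sum in a set `V` of pairwise congruent numbers modulo `d` inside `[b, b + K d]` are counted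
by induction on the number of coordinates. If `V ⊆ [K d, ∞)`, then `V ⊆ [A, 2A]` for some `A`,
the largest coordinate lies in `[A/n, 2A]`, and fixing its index and value
(`n · C (log (2n) + 1)` choices) and removing it leads to the same situation with one coordinate
fewer. Otherwise `V ⊆ [0, 2K d]`: the coordinates with `n yᵢ ≥ d` lie in `[d/n, 2K d]`
(`C (log (2Kn) + 1)` values each), and the remaining ones sum to less than `d`, so their sum is
determined by the large ones modulo `d` and they are counted by the first case alone. Summing
over the set of large coordinates gives `k ≤ (C log (2kn) + O(C n log n))ⁿ`, and since `log k`
enters only linearly this forces `k ≤ (2^(2C+9) n log n)ⁿ`.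
-/

open Finset

theorem Set.ncard_le_sum_ncard_inter {α ι : Type*} {s : Set α} {t : Finset ι}
    {F : ι → Set α} (h : s ⊆ ⋃ i ∈ t, F i) : s.ncard ≤ ∑ i ∈ t, (s ∩ F i).ncard := by
  calc s.ncard = (⋃ i ∈ t, s ∩ F i).ncard := by
        rw [← Set.inter_iUnion₂, Set.inter_eq_left.2 h]
    _ ≤ _ := t.set_ncard_biUnion_le _

def sparseBound (C R : ℕ) : ℕ := C * (Nat.log 2 R + 1)

namespace LogSparse

variable {C : ℕ} {S : Set ℕ}

theorem ncard_inter_Ico_mul_two_pow_le (hS : LogSparse C S) {x : ℕ} (hx : 0 < x) (m : ℕ) :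
    (S ∩ Set.Ico x (x * 2 ^ m)).ncard ≤ C * m := by
  induction m with
  | zero => simp
  | succ m ih =>
    have hsplit : Set.Ico x (x * 2 ^ (m + 1)) =
        Set.Ico x (x * 2 ^ m) ∪ Set.Ico (x * 2 ^ m) (2 * (x * 2 ^ m)) := by
      rw [Set.Ico_union_Ico_eq_Ico (Nat.le_mul_of_pos_right x (by positivity)) (by omega)]
      ring_nf
    calc (S ∩ Set.Ico x (x * 2 ^ (m + 1))).ncard
        ≤ (S ∩ Set.Ico x (x * 2 ^ m)).ncard +
            (S ∩ Set.Ico (x * 2 ^ m) (2 * (x * 2 ^ m))).ncard := by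
          rw [hsplit, Set.inter_union_distrib_left]
          exact Set.ncard_union_le _ _
      _ ≤ C * m + C := add_le_add ih (hS.2 _ (by positivity))
      _ = C * (m + 1) := by ring

theorem ncard_inter_Icc_le (hS : LogSparse C S) {lo hi R : ℕ} (hlo : 0 < lo)
    (hhi : hi ≤ lo * R) : (S ∩ Set.Icc lo hi).ncard ≤ sparseBound C R := by
  have hR : lo * R < lo * 2 ^ (Nat.log 2 R + 1) :=
    Nat.mul_lt_mul_of_pos_left (Nat.lt_pow_succ_log_self one_lt_two R) hlo
  have hsub : S ∩ Set.Icc lo hi ⊆ S ∩ Set.Ico lo (lo * 2 ^ (Nat.log 2 R + 1)) :=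
    Set.inter_subset_inter_right S fun z hz => ⟨hz.1, hz.2.trans_lt (hhi.trans_lt hR)⟩
  exact (Set.ncard_le_ncard hsub ((Set.finite_Ico _ _).inter_of_right S)).trans
    (hS.ncard_inter_Ico_mul_two_pow_le hlo _)

theorem ncard_window_le (hS : LogSparse C S) (ν T A : ℕ) :
    {s ∈ S | A ≤ ν * s ∧ s ≤ T * A}.ncard ≤ sparseBound C (T * ν) := by
  rcases Set.eq_empty_or_nonempty {s ∈ S | A ≤ ν * s ∧ s ≤ T * A} with
    hempty | ⟨s₀, hs₀S, hAs₀, hs₀T⟩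
  · simp [hempty]
  have hs₀ := hS.1 s₀ hs₀S
  have hA : 0 < A := Nat.pos_of_ne_zero fun h => by simp [h] at hs₀T; omega
  have hν : 0 < ν := Nat.pos_of_ne_zero fun h => by simp [h] at hAs₀; omega
  have hlo : 0 < A ⌈/⌉ ν := Nat.pos_of_ne_zero fun h => by
    have := (ceilDiv_le_iff_le_mul hν).1 h.le
    omega
  refine (Set.ncard_le_ncard ?_ ((Set.finite_Icc _ _).inter_of_right S)).trans
    (hS.ncard_inter_Icc_le hlo (hi := T * A) ?_)
  · rintro s ⟨hsS, hAs, hsT⟩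
    exact ⟨hsS, (ceilDiv_le_iff_le_mul hν).2 hAs, hsT⟩
  · calc T * A ≤ T * (ν * (A ⌈/⌉ ν)) := Nat.mul_le_mul_left T (le_smul_ceilDiv hν)
      _ = A ⌈/⌉ ν * (T * ν) := by ring

end LogSparse

section

variable {n : ℕ}

theorem apply_le_sum (y : Fin n → ℕ) (i : Fin n) : y i ≤ ∑ j, y j :=
  single_le_sum (fun j _ => Nat.zero_le (y j)) (mem_univ i)

theorem sum_update_zero_add (y : Fin n → ℕ) (i : Fin n) :
    ∑ j, Function.update y i 0 j + y i = ∑ j, y j := by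
  classical
  rw [sum_update_of_mem (mem_univ i), sum_eq_add_sum_sdiff_singleton_of_mem (mem_univ i) y]
  ring

theorem sum_lt_of_forall_mul_lt {d : ℕ} {x : Fin n → ℕ} (hd : 0 < d)
    (h : ∀ i, n * x i < d) : ∑ i, x i < d := by
  rcases Nat.eq_zero_or_pos n with rfl | hn
  · simpa using hd
  have : Nonempty (Fin n) := ⟨⟨0, hn⟩⟩
  refine Nat.lt_of_mul_lt_mul_left (a := n) ?_
  calc n * ∑ i, x i = ∑ i, n * x i := mul_sum _ _ _
    _ < ∑ _i : Fin n, d := sum_lt_sum_of_nonempty univ_nonempty fun i _ => h i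
    _ = n * d := by simp

theorem exists_mem_sum_le_mul {J : Finset (Fin n)} (hJ : J.Nonempty) {y : Fin n → ℕ}
    (hy : ∀ i ∉ J, y i = 0) : ∃ i ∈ J, ∑ j, y j ≤ n * y i := by
  obtain ⟨i, hi, hmax⟩ := J.exists_max_image y hJ
  refine ⟨i, hi, ?_⟩
  calc ∑ j, y j = ∑ j ∈ J, y j := (sum_subset (subset_univ J) fun j _ hj => hy j hj).symm
    _ ≤ #J * y i := by simpa using sum_le_card_nsmul J y (y i) hmax
    _ ≤ n * y i := Nat.mul_le_mul_right _ ((card_le_univ J).trans_eq (Fintype.card_fin n))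

def sumReps (S : Fin n → Set ℕ) (J : Finset (Fin n)) (V : Set ℕ) : Set (Fin n → ℕ) :=
  {y | (∀ i ∈ J, y i ∈ S i) ∧ (∀ i ∉ J, y i = 0) ∧ ∑ i, y i ∈ V}

def withLargeSet (d : ℕ) (J L : Finset (Fin n)) : Set (Fin n → ℕ) :=
  {y | (∀ i ∈ J \ L, n * y i < d) ∧ ∀ i ∈ L, d ≤ n * y i}

section SumReps

variable {C : ℕ} {S : Fin n → Set ℕ} {J : Finset (Fin n)} {V : Set ℕ}

theorem sumReps_finite (hV : BddAbove V) : (sumReps S J V).Finite := by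
  obtain ⟨B, hB⟩ := hV
  exact (Set.finite_Iic fun _ => B).subset fun y hy i => (apply_le_sum y i).trans (hB hy.2.2)

theorem ncard_sumReps_empty_le_one : (sumReps S ∅ V).ncard ≤ 1 := by
  have : sumReps S ∅ V ⊆ {0} := fun y hy => funext fun i => hy.2.1 i (notMem_empty i)
  exact (Set.ncard_le_ncard this).trans (Set.ncard_singleton _).le

theorem ncard_sumReps_inter_apply_eq_le (hV : BddAbove V) (i : Fin n) (s : ℕ) :
    (sumReps S J V ∩ {y | y i = s}).ncard ≤
      (sumReps S (J.erase i) {z | z + s ∈ V}).ncard := by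
  refine Set.ncard_le_ncard_of_injOn (fun y => Function.update y i 0) ?_ ?_
    (sumReps_finite ?_)
  · rintro y ⟨⟨hyS, hy0, hyV⟩, rfl⟩
    refine ⟨fun j hj => ?_, fun j hj => ?_, ?_⟩
    · rw [Function.update_of_ne (ne_of_mem_erase hj)]
      exact hyS j (mem_of_mem_erase hj)
    · rcases eq_or_ne j i with rfl | hji
      · simp
      · rw [Function.update_of_ne hji]
        exact hy0 j fun h => hj (mem_erase.2 ⟨hji, h⟩)
    · show _ + _ ∈ V
      rwa [sum_update_zero_add]
  · rintro y₁ ⟨-, h₁⟩ y₂ ⟨-, h₂⟩ h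
    funext j
    rcases eq_or_ne j i with rfl | hji
    · exact h₁.trans h₂.symm
    · simpa [Function.update_of_ne hji] using congrFun h j
  · obtain ⟨B, hB⟩ := hV
    exact ⟨B, fun z hz => (Nat.le_add_right z s).trans (hB hz)⟩

theorem ncard_sumReps_le_of_subset_Icc_two_mul (hS : ∀ i, LogSparse C (S i)) {A N : ℕ}
    (hV : V ⊆ Set.Icc A (2 * A)) (hJ : J.Nonempty)
    (hrec : ∀ i ∈ J, ∀ s, (sumReps S (J.erase i) {z | z + s ∈ V}).ncard ≤ N) :
    (sumReps S J V).ncard ≤ n * sparseBound C (2 * n) * N := by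
  have hfin : ∀ i, {s ∈ S i | A ≤ n * s ∧ s ≤ 2 * A}.Finite := fun i =>
    (Set.finite_Iic _).subset fun s hs => hs.2.2
  set B := J.sigma fun i => (hfin i).toFinset
  have hcov : sumReps S J V ⊆ ⋃ p ∈ B, {y | y p.1 = p.2} := by
    intro y hy
    obtain ⟨i, hi, hle⟩ := exists_mem_sum_le_mul hJ hy.2.1
    have hσ := hV hy.2.2
    exact Set.mem_iUnion₂.2 ⟨⟨i, y i⟩, mem_sigma.2 ⟨hi, (hfin i).mem_toFinset.2
      ⟨hy.1 i hi, hσ.1.trans hle, (apply_le_sum y i).trans hσ.2⟩⟩, rfl⟩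
  have hB : #B ≤ n * sparseBound C (2 * n) := by
    rw [card_sigma]
    calc ∑ i ∈ J, #(hfin i).toFinset ≤ ∑ _i ∈ J, sparseBound C (2 * n) :=
          sum_le_sum fun i _ => by
            rw [← Set.ncard_eq_toFinset_card _ (hfin i)]
            exact (hS i).ncard_window_le n 2 A
      _ ≤ n * sparseBound C (2 * n) := by
          rw [sum_const, smul_eq_mul]
          exact Nat.mul_le_mul_right _ ((card_le_univ J).trans_eq (Fintype.card_fin n))
  have hbdd : BddAbove V := ⟨2 * A, fun z hz => (hV hz).2⟩
  calc (sumReps S J V).ncard ≤ ∑ p ∈ B, (sumReps S J V ∩ {y | y p.1 = p.2}).ncard :=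
        Set.ncard_le_sum_ncard_inter hcov
    _ ≤ ∑ _p ∈ B, N := sum_le_sum fun p hp =>
        (ncard_sumReps_inter_apply_eq_le hbdd p.1 p.2).trans (hrec p.1 (mem_sigma.1 hp).1 p.2)
    _ = #B * N := by rw [sum_const, smul_eq_mul]
    _ ≤ n * sparseBound C (2 * n) * N := Nat.mul_le_mul_right N hB

theorem ncard_sumReps_le_of_subsingleton (hS : ∀ i, LogSparse C (S i))
    (hV : V.Subsingleton) : (sumReps S J V).ncard ≤ (n * sparseBound C (2 * n)) ^ #J := by
  induction J using Finset.strongInduction generalizing V with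
  | H J ih =>
  rcases J.eq_empty_or_nonempty with rfl | hJ
  · simpa using ncard_sumReps_empty_le_one
  obtain ⟨q, hq⟩ : ∃ q, V ⊆ {q} := by
    rcases hV.eq_empty_or_singleton with rfl | ⟨q, rfl⟩
    exacts [⟨0, Set.empty_subset _⟩, ⟨q, subset_rfl⟩]
  calc (sumReps S J V).ncard
      ≤ n * sparseBound C (2 * n) * (n * sparseBound C (2 * n)) ^ (#J - 1) :=
        ncard_sumReps_le_of_subset_Icc_two_mul hS
          (hq.trans (Set.singleton_subset_iff.2 ⟨le_rfl, by omega⟩)) hJ fun i hi s => by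
            have := ih _ (erase_ssubset hi) (hV.preimage (add_left_injective s))
            rwa [card_erase_of_mem hi] at this
    _ = (n * sparseBound C (2 * n)) ^ #J := by
        rw [← pow_succ', Nat.sub_add_cancel hJ.card_pos]

theorem ncard_sumReps_eqOn_of_small_le (hS : ∀ i, LogSparse C (S i)) {d : ℕ} (hd : 0 < d)
    (hV : ∀ z ∈ V, ∀ z' ∈ V, z ≡ z' [MOD d]) (L : Finset (Fin n)) (g : Fin n → ℕ) :
    {y ∈ sumReps S J V | (∀ i ∈ J \ L, n * y i < d) ∧ ∀ i ∈ L, y i = g i}.ncard ≤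
      (n * sparseBound C (2 * n)) ^ #(J \ L) := by
  have hV' : {z | z < d ∧ z + ∑ i ∈ L, g i ∈ V}.Subsingleton := fun z hz z' hz' =>
    (Nat.ModEq.add_right_cancel' _ (hV _ hz.2 _ hz'.2)).eq_of_lt_of_lt hz.1 hz'.1
  refine le_trans ?_ (ncard_sumReps_le_of_subsingleton hS hV')
  refine Set.ncard_le_ncard_of_injOn (fun y i => if i ∈ L then 0 else y i) ?_ ?_
    (sumReps_finite ⟨d, fun z hz => hz.1.le⟩)
  · rintro y ⟨⟨hyS, hy0, hyV⟩, hsmall, hg⟩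
    have hsplit : ∑ i, (if i ∈ L then 0 else y i) + ∑ i ∈ L, g i = ∑ i, y i := by
      rw [← sum_add_sum_compl L y, ← sum_add_sum_compl L (fun i => if i ∈ L then 0 else y i),
        sum_congr rfl fun i hi => if_pos hi, sum_congr rfl fun i hi => if_neg (mem_compl.1 hi),
        sum_congr rfl hg]
      simp only [sum_const_zero]
      ring
    refine ⟨fun i hi => ?_, fun i hi => ?_, ?_, ?_⟩ <;> dsimp only
    · rw [if_neg (mem_sdiff.1 hi).2]
      exact hyS i (mem_sdiff.1 hi).1
    · split_ifs with hiL
      · rfl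
      · exact hy0 i fun hiJ => hi (mem_sdiff.2 ⟨hiJ, hiL⟩)
    · refine sum_lt_of_forall_mul_lt hd fun i => ?_
      split_ifs with hiL
      · simpa using hd
      · by_cases hiJ : i ∈ J
        · exact hsmall i (mem_sdiff.2 ⟨hiJ, hiL⟩)
        · simpa [hy0 i hiJ] using hd
    · rwa [hsplit]
  · rintro y₁ ⟨-, -, hg₁⟩ y₂ ⟨-, -, hg₂⟩ h
    funext i
    by_cases hiL : i ∈ L
    · rw [hg₁ i hiL, hg₂ i hiL]
    · simpa [hiL] using congrFun h i

theorem ncard_sumReps_inter_withLargeSet_le (hS : ∀ i, LogSparse C (S i)) {d T : ℕ}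
    (hd : 0 < d) (hVT : V ⊆ Set.Iic (T * d)) (hV : ∀ z ∈ V, ∀ z' ∈ V, z ≡ z' [MOD d])
    {L : Finset (Fin n)} (hL : L ⊆ J) :
    (sumReps S J V ∩ withLargeSet d J L).ncard ≤
      sparseBound C (T * n) ^ #L * (n * sparseBound C (2 * n)) ^ (#J - #L) := by
  classical
  have hfin : ∀ i, {s ∈ S i | d ≤ n * s ∧ s ≤ T * d}.Finite := fun i =>
    (Set.finite_Iic _).subset fun s hs => hs.2.2
  set P := Fintype.piFinset fun i => if i ∈ L then (hfin i).toFinset else {0}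
  have hcov : sumReps S J V ∩ withLargeSet d J L ⊆ ⋃ g ∈ P, {y | ∀ i ∈ L, y i = g i} := by
    rintro y ⟨hy, -, hlarge⟩
    refine Set.mem_iUnion₂.2 ⟨fun i => if i ∈ L then y i else 0,
      Fintype.mem_piFinset.2 fun i => ?_, fun i hi => (if_pos hi).symm⟩
    split_ifs with hi
    · exact (hfin i).mem_toFinset.2
        ⟨hy.1 i (hL hi), hlarge i hi, (apply_le_sum y i).trans (hVT hy.2.2)⟩
    · exact mem_singleton_self 0
  have hP : #P ≤ sparseBound C (T * n) ^ #L := by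
    rw [Fintype.card_piFinset]
    simp only [apply_ite card, card_singleton, prod_ite_mem, univ_inter]
    exact prod_le_pow_card _ _ _ fun i _ => by
      rw [← Set.ncard_eq_toFinset_card _ (hfin i)]
      exact (hS i).ncard_window_le n T d
  have hbdd : BddAbove V := ⟨T * d, hVT⟩
  calc _ ≤ ∑ g ∈ P, (sumReps S J V ∩ withLargeSet d J L ∩ {y | ∀ i ∈ L, y i = g i}).ncard :=
        Set.ncard_le_sum_ncard_inter hcov
    _ ≤ ∑ _g ∈ P, (n * sparseBound C (2 * n)) ^ (#J - #L) := sum_le_sum fun g _ => by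
        rw [← card_sdiff_of_subset hL]
        refine le_trans (Set.ncard_le_ncard ?_ ((sumReps_finite hbdd).sep _))
          (ncard_sumReps_eqOn_of_small_le hS hd hV L g)
        rintro y ⟨⟨hy, hsmall, -⟩, hg⟩
        exact ⟨hy, hsmall, hg⟩
    _ = #P * (n * sparseBound C (2 * n)) ^ (#J - #L) := by rw [sum_const, smul_eq_mul]
    _ ≤ _ := Nat.mul_le_mul_right _ hP

theorem ncard_sumReps_le_of_subset_Iic (hS : ∀ i, LogSparse C (S i)) {d T : ℕ} (hd : 0 < d)
    (hVT : V ⊆ Set.Iic (T * d)) (hV : ∀ z ∈ V, ∀ z' ∈ V, z ≡ z' [MOD d]) :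
    (sumReps S J V).ncard ≤ (sparseBound C (T * n) + n * sparseBound C (2 * n)) ^ #J := by
  classical
  have hcov : sumReps S J V ⊆ ⋃ L ∈ J.powerset, withLargeSet d J L := by
    intro y _
    refine Set.mem_iUnion₂.2 ⟨J.filter fun i => d ≤ n * y i,
      mem_powerset.2 (filter_subset _ _), fun i hi => ?_, fun i hi => (mem_filter.1 hi).2⟩
    simp only [mem_sdiff, mem_filter, not_and, not_le] at hi
    exact hi.2 hi.1
  calc (sumReps S J V).ncard
      ≤ ∑ L ∈ J.powerset, (sumReps S J V ∩ withLargeSet d J L).ncard :=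
        Set.ncard_le_sum_ncard_inter hcov
    _ ≤ ∑ L ∈ J.powerset,
          sparseBound C (T * n) ^ #L * (n * sparseBound C (2 * n)) ^ (#J - #L) :=
        sum_le_sum fun L hL =>
          ncard_sumReps_inter_withLargeSet_le hS hd hVT hV (mem_powerset.1 hL)
    _ = _ := sum_pow_mul_eq_add_pow _ _ _

theorem ncard_sumReps_le_of_subset_Icc (hS : ∀ i, LogSparse C (S i)) {d b K : ℕ}
    (hd : 0 < d) (hVb : V ⊆ Set.Icc b (b + K * d))
    (hV : ∀ z ∈ V, ∀ z' ∈ V, z ≡ z' [MOD d]) :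
    (sumReps S J V).ncard ≤ (sparseBound C (2 * K * n) + n * sparseBound C (2 * n)) ^ #J := by
  induction J using Finset.strongInduction generalizing V b with
  | H J ih =>
  rcases J.eq_empty_or_nonempty with rfl | hJ
  · simpa using ncard_sumReps_empty_le_one
  by_cases hlow : ∃ z₀ ∈ V, z₀ < K * d
  · obtain ⟨z₀, hz₀, hz₀lt⟩ := hlow
    refine ncard_sumReps_le_of_subset_Iic hS hd (fun z hz => ?_) hV
    have h₁ := (hVb hz).2
    have h₂ := (hVb hz₀).1
    simp only [Set.mem_Iic]
    linarith
  push Not at hlow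
  set Θ := sparseBound C (2 * K * n) + n * sparseBound C (2 * n)
  have hA : V ⊆ Set.Icc (max b (K * d)) (2 * max b (K * d)) := fun z hz =>
    ⟨max_le (hVb hz).1 (hlow z hz), by have := (hVb hz).2; omega⟩
  calc (sumReps S J V).ncard ≤ n * sparseBound C (2 * n) * Θ ^ (#J - 1) :=
        ncard_sumReps_le_of_subset_Icc_two_mul hS hA hJ fun i hi s => by
          have := ih (J.erase i) (erase_ssubset hi) (V := {z | z + s ∈ V}) (b := b - s)
            (fun z hz => ⟨by have := (hVb hz).1; omega, by have := (hVb hz).2; omega⟩)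
            (fun z hz z' hz' => Nat.ModEq.add_right_cancel' s (hV _ hz _ hz'))
          rwa [card_erase_of_mem hi] at this
    _ ≤ Θ * Θ ^ (#J - 1) := Nat.mul_le_mul_right _ (Nat.le_add_left _ _)
    _ = Θ ^ #J := by rw [← pow_succ', Nat.sub_add_cancel hJ.card_pos]

variable {a d k : ℕ}

theorem le_ncard_sumReps_of_AP_subset (hd : 0 < d) (h : AP a d k ⊆ sumSet S) :
    k ≤ (sumReps S univ (AP a d k)).ncard := by
  choose! x hxS hx using fun j (hj : j < k) => h ⟨j, hj, rfl⟩
  have hbdd : BddAbove (AP a d k) := ⟨a + k * d, by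
    rintro _ ⟨j, hj, rfl⟩
    have := Nat.mul_le_mul_right d hj.le
    omega⟩
  have hmaps : ∀ j ∈ (range k : Set ℕ), x j ∈ sumReps S univ (AP a d k) := fun j hj => by
    rw [coe_range, Set.mem_Iio] at hj
    exact ⟨fun i _ => hxS j hj i, fun i hi => absurd (mem_univ i) hi, hx j hj ▸ ⟨j, hj, rfl⟩⟩
  have hinj : Set.InjOn x (range k : Set ℕ) := fun j₁ hj₁ j₂ hj₂ h => by
    rw [coe_range, Set.mem_Iio] at hj₁ hj₂
    have := (hx j₁ hj₁).symm.trans (h ▸ hx j₂ hj₂)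
    exact Nat.eq_of_mul_eq_mul_right hd (by omega)
  simpa using Set.ncard_le_ncard_of_injOn x hmaps hinj (sumReps_finite hbdd)

theorem le_pow_of_AP_subset_sumSet (hS : ∀ i, LogSparse C (S i)) (hd : 0 < d)
    (h : AP a d k ⊆ sumSet S) :
    k ≤ (sparseBound C (2 * k * n) + n * sparseBound C (2 * n)) ^ n := by
  have hVb : AP a d k ⊆ Set.Icc a (a + k * d) := by
    rintro _ ⟨j, hj, rfl⟩
    have := Nat.mul_le_mul_right d hj.le
    exact ⟨by omega, by omega⟩
  have hV : ∀ z ∈ AP a d k, ∀ z' ∈ AP a d k, z ≡ z' [MOD d] := by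
    rintro _ ⟨j, -, rfl⟩ _ ⟨j', -, rfl⟩
    simp [Nat.ModEq, Nat.add_mul_mod_self_right]
  simpa using (le_ncard_sumReps_of_AP_subset hd h).trans
    (ncard_sumReps_le_of_subset_Icc (J := univ) hS hd hVb hV)

end SumReps

theorem sparseBound_le_of_lt_two_pow {C R e : ℕ} (hR0 : R ≠ 0) (hR : R < 2 ^ e) :
    sparseBound C R ≤ C * e :=
  Nat.mul_le_mul_left C (Nat.log_lt_of_lt_pow hR0 hR)

theorem sparseBound_add_le {C m : ℕ} (hn : 2 ≤ n) (hm : C * (m + 8) ≤ 2 ^ m) :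
    sparseBound C (2 * ((2 ^ m * n * Nat.log 2 n) ^ n + 1) * n) + n * sparseBound C (2 * n) ≤
      2 ^ m * n * Nat.log 2 n := by
  set l := Nat.log 2 n
  set w := 2 ^ m * n * l
  have hl : 1 ≤ l := Nat.le_log_of_pow_le one_lt_two (by simpa using hn)
  have hnl : n < 2 ^ (l + 1) := Nat.lt_pow_succ_log_self one_lt_two n
  have hw : w < 2 ^ (m + 2 * l + 1) := calc
    w < 2 ^ m * n * 2 ^ l := Nat.mul_lt_mul_of_pos_left l.lt_two_pow_self (by positivity)
    _ ≤ 2 ^ m * 2 ^ (l + 1) * 2 ^ l := by gcongr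
    _ = 2 ^ (m + 2 * l + 1) := by ring
  have hwn : w ^ n + 1 ≤ 2 ^ (n * (m + 2 * l + 1)) := by
    rw [pow_mul']
    exact Nat.pow_lt_pow_left hw (by omega)
  have h₁ : sparseBound C (2 * (w ^ n + 1) * n) ≤ C * (n * (m + 2 * l + 1) + l + 2) :=
    sparseBound_le_of_lt_two_pow (by positivity) <| calc
      2 * (w ^ n + 1) * n < 2 * 2 ^ (n * (m + 2 * l + 1)) * 2 ^ (l + 1) :=
        Nat.mul_lt_mul_of_le_of_lt (by omega) hnl (by positivity)
      _ = 2 ^ (n * (m + 2 * l + 1) + l + 2) := by ring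
  have h₂ : sparseBound C (2 * n) ≤ C * (l + 2) :=
    sparseBound_le_of_lt_two_pow (by omega) (by rw [pow_succ]; omega)
  calc _ ≤ C * (n * (m + 2 * l + 1) + l + 2) + n * (C * (l + 2)) :=
        add_le_add h₁ (Nat.mul_le_mul_left n h₂)
    _ ≤ C * (m + 8) * (n * l) := by
        nlinarith [Nat.mul_le_mul_left (C * n * m) hl, Nat.mul_le_mul_left (C * n) hl,
          Nat.mul_le_mul_left (C * l) (by omega : 1 ≤ n),
          Nat.mul_le_mul_left C (by nlinarith : 2 ≤ n * l)]
    _ ≤ 2 ^ m * (n * l) := Nat.mul_le_mul_right _ hm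
    _ = w := by ring

theorem mul_add_eight_le_two_pow (C : ℕ) : C * (2 * C + 9 + 8) ≤ 2 ^ (2 * C + 9) := by
  have hC := C.lt_two_pow_self
  have h : 2 ^ (2 * C + 9) = 512 * (2 ^ C) ^ 2 := by ring
  rw [h]
  nlinarith

theorem le_pow_log_of_AP_subset_sumSet {C a d k : ℕ} {S : Fin n → Set ℕ} (hn : 2 ≤ n)
    (hS : ∀ i, LogSparse C (S i)) (hd : 0 < d) (h : AP a d k ⊆ sumSet S) :
    k ≤ (2 ^ (2 * C + 9) * n * Nat.log 2 n) ^ n := by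
  by_contra! hk
  have hAP : AP a d ((2 ^ (2 * C + 9) * n * Nat.log 2 n) ^ n + 1) ⊆ sumSet S :=
    fun z ⟨j, hj, hz⟩ => h ⟨j, by omega, hz⟩
  have := (le_pow_of_AP_subset_sumSet hS hd hAP).trans
    (Nat.pow_le_pow_left (sparseBound_add_le hn (mul_add_eight_le_two_pow C)) n)
  omega

theorem natCast_pow_le_rpow_logb (hn : 2 ≤ n) (m : ℕ) :
    ((2 ^ m * n * Nat.log 2 n : ℕ) : ℝ) ^ n ≤ (n : ℝ) ^ ((n : ℝ) *
      (1 + Real.logb 2 (Real.logb 2 n) / Real.logb 2 n + m / Real.logb 2 n)) := by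
  set l := Real.logb 2 n
  have hn0 : (0 : ℝ) < n := by positivity
  have hl : 1 ≤ l := by
    rw [Real.le_logb_iff_rpow_le one_lt_two hn0, Real.rpow_one]
    exact_mod_cast hn
  have hpow : (2 : ℝ) ^ l = n := Real.rpow_logb two_pos (by norm_num) hn0
  have key : (n : ℝ) ^ ((n : ℝ) * (1 + Real.logb 2 l / l + m / l)) = (2 ^ m * n * l) ^ n := by
    calc (n : ℝ) ^ ((n : ℝ) * (1 + Real.logb 2 l / l + m / l))
        = (2 : ℝ) ^ ((n : ℝ) * (l + Real.logb 2 l + m)) := by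
          rw [← hpow, ← Real.rpow_mul zero_le_two]
          congr 1
          field_simp
      _ = (2 ^ m * n * l) ^ n := by
          rw [mul_comm, Real.rpow_mul zero_le_two, Real.rpow_natCast, Real.rpow_add two_pos,
            Real.rpow_add two_pos, hpow, Real.rpow_logb two_pos (by norm_num) (by linarith),
            Real.rpow_natCast]
          ring
  rw [key]
  push_cast
  gcongr
  exact Real.natLog_le_logb n 2

end

theorem ap_in_sumset_upper_precise_general (C : ℕ) :
    ∃ K : ℝ, ∀ n : ℕ, 3 ≤ n → ∀ S : Fin n → Set ℕ, (∀ i, LogSparse C (S i)) →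
      ∀ a d k : ℕ, 1 ≤ d → AP a d k ⊆ sumSet S →
        (k : ℝ) ≤ (n : ℝ) ^ ((n : ℝ) *
          (1 + Real.logb 2 (Real.logb 2 n) / Real.logb 2 n + K / Real.logb 2 n)) := by
  refine ⟨(2 * C + 9 : ℕ), fun n hn S hS a d k hd h => ?_⟩
  calc (k : ℝ) ≤ ((2 ^ (2 * C + 9) * n * Nat.log 2 n : ℕ) : ℝ) ^ n := by
        exact_mod_cast le_pow_log_of_AP_subset_sumSet (by omega) hS hd h
    _ ≤ _ := natCast_pow_le_rpow_logb (by omega) _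

theorem ap_in_sumset_upper_precise (C : ℕ) (hC : 2 ≤ C) :
    ∃ K : ℝ, ∀ n : ℕ, 3 ≤ n → ∀ S : Fin n → Set ℕ, (∀ i, LogSparse C (S i)) →
      ∀ a d k : ℕ, 1 ≤ d → AP a d k ⊆ sumSet S →
        (k : ℝ) ≤ (n : ℝ) ^ ((n : ℝ) *
          (1 + Real.logb 2 (Real.logb 2 n) / Real.logb 2 n + K / Real.logb 2 n)) :=
  ap_in_sumset_upper_precise_general C
end

section
/- The set {2^a + 3^b : a, b ≥ 0 integers} does not contain arbitrarily long arithmetic progressions; i.e., there exists an integer L such that every arithmetic progression contained in this set has length at most L. -/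
lemma aux_pow : ∀ j : ℕ, 24 * (j + 13) + 20 < 2 ^ (j + 11) := by
  intro j
  induction j with
  | zero => norm_num
  | succ n ih =>
    have h2 : (2048:ℕ) ≤ 2 ^ (n + 11) := by
      calc (2048:ℕ) = 2 ^ 11 := by norm_num
        _ ≤ 2 ^ (n + 11) := Nat.pow_le_pow_right (by norm_num) (by omega)
    have : 2 ^ (n + 1 + 11) = 2 * 2 ^ (n + 11) := by ring
    omega

lemma key_lemma (a d k A c : ℕ) (hc : 2 ≤ c) (hd : 1 ≤ d) (F : Finset ℕ) (e : ℕ → ℕ)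
    (hFk : ∀ i ∈ F, i < k)
    (hF : ∀ i ∈ F, a + i * d = A + c ^ (e i))
    (hcard : 13 ≤ F.card) : 2 ^ (F.card - 2) ≤ 2 * k := by
  set m := F.card with hm
  have hF0 : F.Nonempty := Finset.card_pos.mp (by omega)
  set i0 := F.min' hF0 with hi0
  have hi0F : i0 ∈ F := F.min'_mem hF0
  have hcE : (F.erase i0).card = m - 1 := Finset.card_erase_of_mem hi0F
  have hE : (F.erase i0).Nonempty := Finset.card_pos.mp (by omega)
  set i1 := (F.erase i0).min' hE with hi1
  set i2 := F.max' hF0 with hi2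
  have hi1E : i1 ∈ F.erase i0 := (F.erase i0).min'_mem hE
  have hi1F : i1 ∈ F := Finset.mem_of_mem_erase hi1E
  have hi2F : i2 ∈ F := F.max'_mem hF0
  have hi01 : i0 < i1 :=
    lt_of_le_of_ne (F.min'_le i1 hi1F) (Ne.symm (Finset.ne_of_mem_erase hi1E))
  have hi12 : i1 ≤ i2 := F.le_max' i1 hi1F
  have hc1 : 1 < c := hc
  -- strict monotonicity of exponents
  have mono : ∀ i ∈ F, ∀ j ∈ F, i < j → e i < e j := by
    intro i hi j hj hij
    have h1 := hF i hi
    have h2 := hF j hj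
    have hlt : a + i * d < a + j * d := by
      have : i * d < j * d := Nat.mul_lt_mul_of_lt_of_le hij le_rfl hd
      omega
    rw [h1, h2] at hlt
    exact (Nat.pow_lt_pow_iff_right hc1).mp (by omega)
  have monole : ∀ i ∈ F, ∀ j ∈ F, i ≤ j → e i ≤ e j := by
    intro i hi j hj hij
    rcases eq_or_lt_of_le hij with rfl | h
    · exact le_rfl
    · exact (mono i hi j hj h).le
  -- exponent gap
  have himg : ((F.erase i0).image e).card = m - 1 := by
    rw [Finset.card_image_of_injOn, hcE]
    intro x hx y hy hxy
    have hx' := Finset.mem_of_mem_erase hx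
    have hy' := Finset.mem_of_mem_erase hy
    by_contra hne
    rcases Nat.lt_or_ge x y with h | h
    · exact absurd hxy (mono x hx' y hy' h).ne
    · exact absurd hxy.symm (mono y hy' x hx' (by omega)).ne
  have hsub : (F.erase i0).image e ⊆ Finset.Icc (e i1) (e i2) := by
    intro x hx
    obtain ⟨j, hj, rfl⟩ := Finset.mem_image.mp hx
    have hjF := Finset.mem_of_mem_erase hj
    exact Finset.mem_Icc.mpr ⟨monole i1 hi1F j hjF ((F.erase i0).min'_le j hj),
      monole j hjF i2 hi2F (F.le_max' j hjF)⟩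
  have hgap : e i1 + (m - 2) ≤ e i2 := by
    have := Finset.card_le_card hsub
    rw [himg, Nat.card_Icc] at this
    have : e i1 ≤ e i2 := monole i1 hi1F i2 hi2F hi12
    omega
  have hgap02 : e i0 + 1 ≤ e i2 := mono i0 hi0F i2 hi2F (lt_of_lt_of_le hi01 hi12)
  -- d ≤ c ^ e i1
  have hd1 : d ≤ c ^ (e i1) := by
    have e0 := hF i0 hi0F
    have e1 := hF i1 hi1F
    have hmul : i0 * d + d ≤ i1 * d := by
      calc i0 * d + d = (i0 + 1) * d := by ring
        _ ≤ i1 * d := Nat.mul_le_mul_right d hi01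
    have hp0 : 1 ≤ c ^ (e i0) := Nat.one_le_pow _ _ (by omega)
    have lin : ∀ u0 u1 r0 r1 : ℕ, a + u0 = A + r0 → a + u1 = A + r1 →
        u0 + d ≤ u1 → 1 ≤ r0 → d ≤ r1 := by intros; omega
    exact lin (i0 * d) (i1 * d) _ _ e0 e1 hmul hp0
  -- c ^ e i2 ≤ 2 * (k * d)
  have hup : c ^ (e i2) ≤ 2 * (k * d) := by
    have e0 := hF i0 hi0F
    have e2 := hF i2 hi2F
    have hmul : i2 * d ≤ i0 * d + k * d := by
      calc i2 * d ≤ (i0 + k) * d := Nat.mul_le_mul_right d (by have := hFk i2 hi2F; omega)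
        _ = i0 * d + k * d := by ring
    have hdbl : 2 * c ^ (e i0) ≤ c ^ (e i2) := by
      calc 2 * c ^ (e i0) ≤ c * c ^ (e i0) := Nat.mul_le_mul_right _ hc
        _ = c ^ (e i0 + 1) := by ring
        _ ≤ c ^ (e i2) := Nat.pow_le_pow_right (by omega) hgap02
    have lin : ∀ u0 u2 w r0 r2 : ℕ, a + u0 = A + r0 → a + u2 = A + r2 →
        u2 ≤ u0 + w → 2 * r0 ≤ r2 → r2 ≤ 2 * w := by intros; omega
    exact lin (i0 * d) (i2 * d) (k * d) _ _ e0 e2 hmul hdbl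
  have hlow : 2 ^ (m - 2) * d ≤ c ^ (e i2) := by
    calc 2 ^ (m - 2) * d ≤ c ^ (m - 2) * c ^ (e i1) :=
          Nat.mul_le_mul (Nat.pow_le_pow_left hc _) hd1
      _ = c ^ (e i1 + (m - 2)) := by rw [pow_add, mul_comm]
      _ ≤ c ^ (e i2) := Nat.pow_le_pow_right (by omega) hgap
  have : 2 ^ (m - 2) * d ≤ (2 * k) * d := by
    calc 2 ^ (m - 2) * d ≤ 2 * (k * d) := hlow.trans hup
      _ = (2 * k) * d := by ring
  exact Nat.le_of_mul_le_mul_right this (by omega)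

lemma final_contra (k m : ℕ) (h500 : 500 < k) (hm : (k - k / 2) / 6 ≤ m)
    (hle : 2 ^ (m - 2) ≤ 2 * k) : False := by
  set n := (k - k / 2) / 6 with hn
  have hn13 : 13 ≤ n := by omega
  have hk : k ≤ 12 * n + 10 := by omega
  obtain ⟨j, hj⟩ : ∃ j, n = j + 13 := ⟨n - 13, by omega⟩
  have h1 := aux_pow j
  have h2 : 2 ^ (j + 11) ≤ 2 ^ (m - 2) := Nat.pow_le_pow_right (by norm_num) (by omega)
  omega


theorem no_long_ap_in_2a_plus_3b :
    ∃ L : ℕ, ∀ a d k : ℕ, 1 ≤ d →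
      AP a d k ⊆ {m : ℕ | ∃ x y : ℕ, m = 2 ^ x + 3 ^ y} → k ≤ L := by
  classical
  use 500
  intro a d k hd hsub
  by_contra hk
  push_neg at hk
  have hS : ∀ i : ℕ, ∃ x y : ℕ, i < k → a + i * d = 2 ^ x + 3 ^ y := by
    intro i
    by_cases hi : i < k
    · obtain ⟨x, y, hxy⟩ := hsub ⟨i, hi, rfl⟩
      exact ⟨x, y, fun _ => hxy⟩
    · exact ⟨0, 0, fun h => absurd h hi⟩
  choose X Y hXY using hS
  set T := a + (k - 1) * d with hT
  have hT2 : 2 ≤ T := by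
    have h := hXY (k - 1) (by omega)
    have h2 : 1 ≤ 2 ^ X (k - 1) := Nat.one_le_two_pow
    have h3 : 1 ≤ 3 ^ Y (k - 1) := Nat.one_le_pow _ _ (by norm_num)
    omega
  set I : Finset ℕ := Finset.Ico (k / 2) k with hI
  have htle : ∀ i ∈ I, a + i * d ≤ T := by
    intro i hi
    rw [hI, Finset.mem_Ico] at hi
    have : i * d ≤ (k - 1) * d := Nat.mul_le_mul_right d (by omega)
    omega
  have htge : ∀ i ∈ I, T ≤ 2 * (a + i * d) := by
    intro i hi
    rw [hI, Finset.mem_Ico] at hi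
    have : (k - 1) * d ≤ 2 * (i * d) := by
      calc (k - 1) * d ≤ (2 * i) * d := Nat.mul_le_mul_right d (by omega)
        _ = 2 * (i * d) := by ring
    omega
  set lX := Nat.log 2 T with hlX
  set lY := Nat.log 3 T with hlY
  set f : ℕ → ℕ × ℕ := fun i => if T ≤ 4 * 2 ^ X i then (2, X i) else (3, Y i) with hf
  set t : Finset (ℕ × ℕ) := ((Finset.Icc (lX - 2) lX).image fun e => (2, e)) ∪
      ((Finset.Icc (lY - 2) lY).image fun e => (3, e)) with ht
  have htcard : t.card ≤ 6 := by
    refine le_trans (Finset.card_union_le _ _) ?_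
    have h1 := Finset.card_image_le (s := Finset.Icc (lX - 2) lX) (f := fun e => ((2 : ℕ), e))
    have h2 := Finset.card_image_le (s := Finset.Icc (lY - 2) lY) (f := fun e => ((3 : ℕ), e))
    rw [Nat.card_Icc] at h1 h2
    omega
  have hmaps : ∀ i ∈ I, f i ∈ t := by
    intro i hi
    have heq := hXY i (by rw [hI, Finset.mem_Ico] at hi; exact hi.2)
    have hle := htle i hi
    have hge := htge i hi
    rw [hf]
    simp only
    split_ifs with h
    · refine Finset.mem_union_left _ (Finset.mem_image.mpr ⟨X i, ?_, rfl⟩)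
      have hu : 2 ^ X i ≤ T := by have : 1 ≤ 3 ^ Y i := Nat.one_le_pow _ _ (by norm_num); omega
      have hXle : X i ≤ lX := Nat.le_log_of_pow_le (by norm_num) hu
      have hXge : lX < X i + 3 := by
        apply Nat.log_lt_of_lt_pow (by omega)
        have : 2 ^ (X i + 3) = 8 * 2 ^ X i := by ring
        omega
      exact Finset.mem_Icc.mpr ⟨by omega, hXle⟩
    · refine Finset.mem_union_right _ (Finset.mem_image.mpr ⟨Y i, ?_, rfl⟩)
      have hv : 3 ^ Y i ≤ T := by have : 1 ≤ 2 ^ X i := Nat.one_le_two_pow; omega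
      have hvd : T ≤ 4 * 3 ^ Y i := by omega
      have hYle : Y i ≤ lY := Nat.le_log_of_pow_le (by norm_num) hv
      have hYge : lY < Y i + 3 := by
        apply Nat.log_lt_of_lt_pow (by omega)
        have h27 : 3 ^ (Y i + 3) = 27 * 3 ^ Y i := by ring
        have h1 : 1 ≤ 3 ^ Y i := Nat.one_le_pow _ _ (by norm_num)
        omega
      exact Finset.mem_Icc.mpr ⟨by omega, hYle⟩
  have hIcard : I.card = k - k / 2 := Nat.card_Ico _ _
  have htne : t.Nonempty := ⟨f (k / 2), hmaps _ (by rw [hI, Finset.mem_Ico]; omega)⟩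
  have hn6 : t.card * ((k - k / 2) / 6) ≤ I.card := by
    rw [hIcard]
    calc t.card * ((k - k / 2) / 6) ≤ 6 * ((k - k / 2) / 6) :=
          Nat.mul_le_mul_right _ htcard
      _ ≤ k - k / 2 := by omega
  obtain ⟨⟨b, E⟩, hbt, hfib⟩ :=
    Finset.exists_le_card_fiber_of_mul_le_card_of_maps_to hmaps htne hn6
  set F := {x ∈ I | f x = (b, E)} with hF
  have hFk : ∀ i ∈ F, i < k := by
    intro i hi
    rw [hF] at hi
    have := (Finset.mem_filter.mp hi).1
    rw [hI, Finset.mem_Ico] at this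
    exact this.2
  have hm13 : 13 ≤ F.card := le_trans (by omega) hfib
  have hcase : (∀ i ∈ F, a + i * d = 2 ^ E + 3 ^ Y i) ∨
      (∀ i ∈ F, a + i * d = 3 ^ E + 2 ^ X i) := by
    by_cases hb : b = 2
    · left
      intro i hi
      have hfi : f i = (b, E) := (Finset.mem_filter.mp hi).2
      rw [hf] at hfi
      simp only at hfi
      split_ifs at hfi with h
      · obtain ⟨h2, hXE⟩ := Prod.mk.injEq .. ▸ hfi
        rw [← hXE]
        exact hXY i (hFk i hi)
      · exact absurd (congrArg Prod.fst hfi) (by simp [hb])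
    · right
      intro i hi
      have hfi : f i = (b, E) := (Finset.mem_filter.mp hi).2
      rw [hf] at hfi
      simp only at hfi
      split_ifs at hfi with h
      · exact absurd (congrArg Prod.fst hfi).symm (by simpa using hb)
      · obtain ⟨h3, hYE⟩ := Prod.mk.injEq .. ▸ hfi
        rw [← hYE]
        have := hXY i (hFk i hi)
        omega
  rcases hcase with h | h
  · exact final_contra k F.card hk hfib
      (key_lemma a d k (2 ^ E) 3 (by norm_num) hd F Y hFk h hm13)
  · exact final_contra k F.card hk hfib
      (key_lemma a d k (3 ^ E) 2 (by norm_num) hd F X hFk h hm13)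
end

section
/- For every ε with 0 < ε < 1, there exists n₀ such that for all n ≥ n₀ there exist 2-log-sparse sets S₁, ..., Sₙ of positive integers whose sumset S₁ + ⋯ + Sₙ contains an arithmetic progression of length at least n^{(1-ε)²·n}. -/
/-! With `b = ⌈n^(1-ε)⌉`, `s = b + ⌊log₂ n⌋ + 1` and `m = n - s ≥ (1-ε)n`, take `A = b^m` and
the `m` sets `{A·2^c + c·bⁱ : c < b}`: the dominant term `A·2^c` makes each of them 2-log-sparse,
while `c·bⁱ` records a base-`b` digit. So every `j < b^m` is a sum of one element from each set,
up to an error `A·h` with `h = ∑ 2^(cᵢ) ≤ m·2^b < 2^s`. The remaining `s` sets `{A·2^q, A·2^(q+1)}`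
produce every `A·(2^s - 1 + t)` with `t < 2^s` from the binary digits of `t`, which absorbs the
error. Hence the sumset contains an interval of length `b^m ≥ n^((1-ε)² n)`. -/

open Filter Asymptotics

theorem logSparse_two_image_of_two_mul_le {g : ℕ → ℕ} (hpos : ∀ c, 0 < g c) (hmono : Monotone g)
    (hgrow : ∀ c, 2 * g c ≤ g (c + 2)) (U : Set ℕ) : LogSparse 2 (g '' U) := by
  refine ⟨fun _ ⟨c, _, hc⟩ => hc ▸ hpos c, fun x _ => ?_⟩
  have hclose : ∀ c c', g c ∈ Set.Ico x (2 * x) → g c' ∈ Set.Ico x (2 * x) → c' < c + 2 := by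
    intro c c' hc hc'
    by_contra! h
    have := hmono h
    have := hgrow c
    simp only [Set.mem_Ico] at hc hc'
    omega
  by_contra! h3
  obtain ⟨_, ⟨⟨c₁, -, rfl⟩, h₁⟩, _, ⟨⟨c₂, -, rfl⟩, h₂⟩, _, ⟨⟨c₃, -, rfl⟩, h₃⟩, h₁₂, h₁₃, h₂₃⟩ :=
    (Set.two_lt_ncard ((Set.finite_Ico x (2 * x)).subset Set.inter_subset_right)).mp h3
  -- three distinct indices cannot lie pairwise at distance at most one
  have := hclose _ _ h₁ h₂; have := hclose _ _ h₂ h₁; have := hclose _ _ h₁ h₃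
  have := hclose _ _ h₃ h₁; have := hclose _ _ h₂ h₃; have := hclose _ _ h₃ h₂
  have := ne_of_apply_ne g h₁₂; have := ne_of_apply_ne g h₁₃; have := ne_of_apply_ne g h₂₃
  omega

theorem logSparse_two_pair {u v : ℕ} (hu : 0 < u) (hv : 0 < v) : LogSparse 2 {u, v} := by
  refine ⟨by rintro t (rfl | rfl) <;> assumption, fun x _ => ?_⟩
  calc ({u, v} ∩ Set.Ico x (2 * x)).ncard ≤ ({u, v} : Set ℕ).ncard :=
        Set.ncard_le_ncard Set.inter_subset_left (Set.toFinite _)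
    _ ≤ 2 := by simpa using Set.ncard_insert_le u {v}

theorem add_mem_sumSet_append {m n : ℕ} {S : Fin m → Set ℕ} {T : Fin n → Set ℕ} {u v : ℕ}
    (hu : u ∈ sumSet S) (hv : v ∈ sumSet T) : u + v ∈ sumSet (Fin.append S T) := by
  obtain ⟨x, hxS, rfl⟩ := hu
  obtain ⟨y, hyT, rfl⟩ := hv
  refine ⟨Fin.append x y, fun i => ?_, by simp [Fin.sum_univ_add]⟩
  cases i using Fin.addCases <;> simp [hxS, hyT]

def digitSet (A b i : ℕ) : Set ℕ := (fun c => A * 2 ^ c + c * b ^ i) '' Set.Iio b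

def bitSet (A q : ℕ) : Set ℕ := {A * 2 ^ q, A * 2 ^ (q + 1)}

theorem logSparse_two_digitSet {A b i : ℕ} (hA : 0 < A) (hbA : b ^ i ≤ A) :
    LogSparse 2 (digitSet A b i) := by
  refine logSparse_two_image_of_two_mul_le (fun c => by positivity)
    (fun c c' h => by gcongr; norm_num) (fun c => ?_) _
  have : c * b ^ i ≤ A * 2 ^ c := by
    rw [mul_comm A]; exact Nat.mul_le_mul Nat.lt_two_pow_self.le hbA
  rw [show A * 2 ^ (c + 2) + (c + 2) * b ^ i = 4 * (A * 2 ^ c) + c * b ^ i + 2 * b ^ i by ring]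
  omega

theorem exists_mul_add_mem_sumSet_digitSet (A : ℕ) {b m j : ℕ} (hj : j < b ^ m) :
    ∃ h ≤ m * 2 ^ b, A * h + j ∈ sumSet (fun i : Fin m => digitSet A b i) := by
  set c := finFunctionFinEquiv.symm ⟨j, hj⟩
  have hc : ∑ i, (c i : ℕ) * b ^ (i : ℕ) = j := by
    rw [← finFunctionFinEquiv_apply, Equiv.apply_symm_apply]
  refine ⟨∑ i, 2 ^ (c i : ℕ), ?_, fun i => A * 2 ^ (c i : ℕ) + c i * b ^ (i : ℕ),
    fun i => ⟨c i, (c i).isLt, rfl⟩, ?_⟩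
  · calc ∑ i, 2 ^ (c i : ℕ) ≤ ∑ _i : Fin m, 2 ^ b :=
          Finset.sum_le_sum fun i _ => Nat.pow_le_pow_right two_pos (c i).isLt.le
      _ = m * 2 ^ b := by simp
  · rw [Finset.sum_add_distrib, ← Finset.mul_sum, hc]

theorem mul_add_mem_sumSet_bitSet (A : ℕ) {s t : ℕ} (ht : t < 2 ^ s) :
    A * (∑ q : Fin s, 2 ^ (q : ℕ) + t) ∈ sumSet (fun q : Fin s => bitSet A q) := by
  set e := finFunctionFinEquiv.symm ⟨t, ht⟩
  have he : ∑ q, (e q : ℕ) * 2 ^ (q : ℕ) = t := by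
    rw [← finFunctionFinEquiv_apply, Equiv.apply_symm_apply]
  refine ⟨fun q => A * 2 ^ (q : ℕ) * (1 + e q), fun q => ?_, ?_⟩
  · obtain h | h : (e q : ℕ) = 0 ∨ (e q : ℕ) = 1 := by omega
    all_goals simp [bitSet, h, pow_succ, mul_assoc]
  · simp only [mul_add, mul_one, Finset.sum_add_distrib, ← he, Finset.mul_sum]
    congr 1
    exact Finset.sum_congr rfl fun q _ => by ring

theorem exists_logSparse_ap_subset_sumSet {b s n : ℕ} (hb : 0 < b) (hsn : s ≤ n)
    (hbound : (n - s) * 2 ^ b < 2 ^ s) :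
    ∃ S : Fin n → Set ℕ, (∀ i, LogSparse 2 (S i)) ∧ ∃ a, AP a 1 (b ^ (n - s)) ⊆ sumSet S := by
  obtain ⟨m, rfl⟩ := Nat.exists_eq_add_of_le' hsn
  rw [Nat.add_sub_cancel] at hbound ⊢
  have hA : 0 < b ^ m := by positivity
  refine ⟨Fin.append (fun i : Fin m => digitSet (b ^ m) b i) (fun q : Fin s => bitSet (b ^ m) q),
    fun i => ?_, b ^ m * (∑ q : Fin s, 2 ^ (q : ℕ) + m * 2 ^ b), ?_⟩
  · cases i using Fin.addCases with
    | left i =>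
      rw [Fin.append_left]
      exact logSparse_two_digitSet hA (Nat.pow_le_pow_right hb i.isLt.le)
    | right q =>
      rw [Fin.append_right]
      exact logSparse_two_pair (by positivity) (by positivity)
  · rintro _ ⟨j, hj, rfl⟩
    obtain ⟨h, hh, hmem⟩ := exists_mul_add_mem_sumSet_digitSet (b ^ m) hj
    have hmem' := add_mem_sumSet_append hmem
      (mul_add_mem_sumSet_bitSet (b ^ m) (s := s) (t := m * 2 ^ b - h) (by omega))
    convert hmem' using 1
    obtain ⟨t, ht⟩ := Nat.exists_eq_add_of_le hh
    rw [ht, Nat.add_sub_cancel_left]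
    ring

theorem isLittleO_rpow_id_atTop {r : ℝ} (hr : r < 1) : (fun x : ℝ => x ^ r) =o[atTop] id := by
  have hx0 : ∀ᶠ x : ℝ in atTop, id x = 0 → x ^ r = 0 := by
    filter_upwards [eventually_gt_atTop 0] with x hx h
    exact absurd h hx.ne'
  rw [isLittleO_iff_tendsto' hx0]
  refine (tendsto_rpow_neg_atTop (sub_pos.mpr hr)).congr' ?_
  filter_upwards [eventually_gt_atTop 0] with x hx
  rw [id, ← Real.rpow_sub_one hx.ne', neg_sub]

theorem eventually_ceil_rpow_add_log_le {ε r : ℝ} (hε : 0 < ε) (hr : r < 1) :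
    ∀ᶠ n : ℕ in atTop, ((⌈(n : ℝ) ^ r⌉₊ + Nat.log 2 n + 1 : ℕ) : ℝ) ≤ ε * n := by
  have hlittle : (fun x : ℝ => x ^ r + Real.logb 2 x + 2) =o[atTop] id :=
    ((isLittleO_rpow_id_atTop hr).add Real.isLittleO_logb_id_atTop).add
      (isLittleO_const_id_atTop 2)
  filter_upwards [(hlittle.comp_tendsto tendsto_natCast_atTop_atTop).def hε] with n hn
  simp only [Function.comp_apply, id, Real.norm_eq_abs, Nat.abs_cast] at hn
  have := Nat.ceil_lt_add_one (Real.rpow_nonneg n.cast_nonneg r)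
  have : (Nat.log 2 n : ℝ) ≤ Real.logb 2 n := mod_cast Real.natLog_le_logb n 2
  have := le_abs_self ((n : ℝ) ^ r + Real.logb 2 n + 2)
  push_cast
  linarith

theorem rpow_mul_le_ceil_rpow_pow {x r y : ℝ} {m : ℕ} (hx : 1 ≤ x) (hr : 0 ≤ r)
    (hy : y ≤ m) : x ^ (r * y) ≤ (⌈x ^ r⌉₊ : ℝ) ^ m :=
  calc x ^ (r * y) ≤ x ^ (r * m) :=
        Real.rpow_le_rpow_of_exponent_le hx (mul_le_mul_of_nonneg_left hy hr)
    _ = (x ^ r) ^ m := by rw [Real.rpow_mul (by linarith), Real.rpow_natCast]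
    _ ≤ (⌈x ^ r⌉₊ : ℝ) ^ m := pow_le_pow_left₀ (by positivity) (Nat.le_ceil _) m

theorem ap_in_sumset_lower (ε : ℝ) (hε0 : 0 < ε) (hε1 : ε < 1) :
    ∃ n₀ : ℕ, ∀ n : ℕ, n₀ ≤ n →
      ∃ S : Fin n → Set ℕ, (∀ i, LogSparse 2 (S i)) ∧
        ∃ a d k : ℕ, 1 ≤ d ∧ (n : ℝ) ^ ((1 - ε) ^ 2 * (n : ℝ)) ≤ (k : ℝ) ∧
          AP a d k ⊆ sumSet S := by
  obtain ⟨n₀, hn₀⟩ := eventually_atTop.mp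
    (eventually_ceil_rpow_add_log_le (r := 1 - ε) hε0 (by linarith))
  refine ⟨n₀, fun n hn => ?_⟩
  set b := ⌈(n : ℝ) ^ (1 - ε)⌉₊
  set s := b + Nat.log 2 n + 1 with hs
  have hsε : (s : ℝ) ≤ ε * n := hn₀ n hn
  have hsn : s < n := by
    have : (1 : ℝ) ≤ s := by exact_mod_cast Nat.le_add_left 1 _
    exact_mod_cast (show (s : ℝ) < n by nlinarith)
  have hbound : (n - s) * 2 ^ b < 2 ^ s :=
    calc (n - s) * 2 ^ b ≤ n * 2 ^ b := Nat.mul_le_mul_right _ (Nat.sub_le n s)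
      _ < 2 ^ (Nat.log 2 n + 1) * 2 ^ b :=
          Nat.mul_lt_mul_of_pos_right (Nat.lt_pow_succ_log_self one_lt_two n) (by positivity)
      _ = 2 ^ s := by rw [← pow_add, hs]; ring_nf
  have hn1 : (1 : ℝ) ≤ n := by exact_mod_cast (Nat.zero_le s).trans_lt hsn
  obtain ⟨S, hS, a, hAP⟩ := exists_logSparse_ap_subset_sumSet
    (Nat.ceil_pos.mpr (Real.rpow_pos_of_pos (by linarith) _)) hsn.le hbound
  refine ⟨S, hS, a, 1, b ^ (n - s), le_rfl, ?_, hAP⟩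
  rw [sq, mul_assoc, Nat.cast_pow]
  exact rpow_mul_le_ceil_rpow_pow hn1 (by linarith) (by rw [Nat.cast_sub hsn.le]; linarith)
end

section
/- Let x₁ ≥ x₂ ≥ ⋯ ≥ x_a be positive integers with each xᵢ ≥ Δ, and suppose x₁ + ⋯ + x_a + R ∈ [m, m + Δ] for some R ≥ 0 and x₁ + ⋯ + x_{i-1} + n·xᵢ ≥ m for each i ≤ a (where a ≤ n). Then for each i, setting M = m + Δ - (x₁ + ⋯ + x_{i-1}), we have M/(n+1) ≤ xᵢ ≤ M; in particular if xᵢ is constrained to lie in a C-log-sparse set, there are at most C·(log₂(n+1)+1) possible values for xᵢ given x₁, ..., x_{i-1}. -/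
open Finset

lemma Set.finite_inter_natCast_preimage_Ico (T : Set ℕ) (a b : ℝ) :
    (T ∩ (Nat.cast ⁻¹' Set.Ico a b)).Finite :=
  (Set.finite_Iio ⌈b⌉₊).subset fun _ hv => Nat.lt_ceil.mpr hv.2.2

namespace LogSparse

variable {C : ℕ} {T : Set ℕ}

lemma ncard_inter_Ico_two_mul_le (hT : LogSparse C T) (y : ℝ) :
    (T ∩ (Nat.cast ⁻¹' Set.Ico y (2 * y))).ncard ≤ C := by
  rcases le_or_gt y 0 with hy | hy
  · rw [Set.Ico_eq_empty (by linarith), Set.preimage_empty, Set.inter_empty, Set.ncard_empty]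
    exact Nat.zero_le C
  · refine le_trans (Set.ncard_le_ncard ?_ ((Set.finite_Ico _ _).inter_of_right T))
      (hT.2 ⌈y⌉₊ (Nat.ceil_pos.mpr hy))
    rintro v ⟨hvT, hyv, hv2y⟩
    refine ⟨hvT, Nat.ceil_le.mpr hyv, ?_⟩
    have : (v : ℝ) < 2 * ⌈y⌉₊ := by linarith [Nat.le_ceil y]
    exact_mod_cast this

lemma ncard_inter_Ico_two_pow_mul_le (hT : LogSparse C T) (y : ℝ) (K : ℕ) :
    (T ∩ (Nat.cast ⁻¹' Set.Ico y (2 ^ K * y))).ncard ≤ C * K := by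
  induction K with
  | zero => simp
  | succ K ih =>
    have hcover : T ∩ (Nat.cast ⁻¹' Set.Ico y (2 ^ (K + 1) * y)) ⊆
        T ∩ (Nat.cast ⁻¹' Set.Ico y (2 ^ K * y)) ∪
          T ∩ (Nat.cast ⁻¹' Set.Ico (2 ^ K * y) (2 * (2 ^ K * y))) := by
      rw [← Set.inter_union_distrib_left, ← Set.preimage_union, pow_succ', mul_assoc]
      exact Set.inter_subset_inter_right T (Set.preimage_mono Set.Ico_subset_Ico_union_Ico)
    calc (T ∩ (Nat.cast ⁻¹' Set.Ico y (2 ^ (K + 1) * y))).ncard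
        ≤ (T ∩ (Nat.cast ⁻¹' Set.Ico y (2 ^ K * y))).ncard +
            (T ∩ (Nat.cast ⁻¹' Set.Ico (2 ^ K * y) (2 * (2 ^ K * y)))).ncard :=
          (Set.ncard_le_ncard hcover ((Set.finite_inter_natCast_preimage_Ico _ _ _).union
            (Set.finite_inter_natCast_preimage_Ico _ _ _))).trans (Set.ncard_union_le _ _)
      _ ≤ C * K + C := Nat.add_le_add ih (hT.ncard_inter_Ico_two_mul_le _)
      _ = C * (K + 1) := by ring

lemma ncard_inter_Icc_div_le (hT : LogSparse C T) (M : ℝ) {z : ℝ} (hz : 1 ≤ z) :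
    ((T ∩ (Nat.cast ⁻¹' Set.Icc (M / z) M)).ncard : ℝ) ≤ C * (Real.logb 2 z + 1) := by
  set K := ⌊Real.logb 2 z⌋₊ + 1
  have hlog : 0 ≤ Real.logb 2 z := Real.logb_nonneg one_lt_two hz
  have hz_lt : z < 2 ^ K := by
    rw [← Real.rpow_natCast, ← Real.logb_lt_iff_lt_rpow one_lt_two (by linarith)]
    push_cast [K]
    exact Nat.lt_floor_add_one _
  have hK : (K : ℝ) ≤ Real.logb 2 z + 1 := by
    push_cast [K]
    linarith [Nat.floor_le hlog]
  rcases le_or_gt M 0 with hM | hM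
  · have hempty : T ∩ (Nat.cast ⁻¹' Set.Icc (M / z) M) = ∅ :=
      Set.eq_empty_of_forall_notMem fun v ⟨hvT, _, hvM⟩ => by
        have : (0 : ℝ) < v := by exact_mod_cast hT.1 v hvT
        linarith
    rw [hempty, Set.ncard_empty, Nat.cast_zero]
    positivity
  · have hcover : T ∩ (Nat.cast ⁻¹' Set.Icc (M / z) M) ⊆
        T ∩ (Nat.cast ⁻¹' Set.Ico (M / z) (2 ^ K * (M / z))) := by
      refine Set.inter_subset_inter_right T (Set.preimage_mono (Set.Icc_subset_Ico_right ?_))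
      rw [← mul_div_assoc, lt_div_iff₀ (by linarith), mul_comm]
      exact mul_lt_mul_of_pos_right hz_lt hM
    calc ((T ∩ (Nat.cast ⁻¹' Set.Icc (M / z) M)).ncard : ℝ)
        ≤ (C * K : ℕ) := by
          exact_mod_cast
            (Set.ncard_le_ncard hcover (Set.finite_inter_natCast_preimage_Ico _ _ _)).trans
              (hT.ncard_inter_Ico_two_pow_mul_le _ K)
      _ ≤ C * (Real.logb 2 z + 1) := by
          push_cast
          exact mul_le_mul_of_nonneg_left hK (Nat.cast_nonneg C)

end LogSparse

lemma sum_Icc_one_pred_add_le_sum_Icc_one {M : Type*} [AddCommMonoid M] [PartialOrder M]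
    [CanonicallyOrderedAdd M] (x : ℕ → M) {i a : ℕ} (hi : 1 ≤ i) (hia : i ≤ a) :
    (∑ j ∈ Icc 1 (i - 1), x j) + x i ≤ ∑ j ∈ Icc 1 a, x j := by
  obtain ⟨k, rfl⟩ : ∃ k, i = k + 1 := ⟨i - 1, by omega⟩
  rw [Nat.add_sub_cancel, ← sum_Icc_succ_top (by omega)]
  exact sum_le_sum_of_subset (Icc_subset_Icc_right hia)

theorem large_terms_range_general (n a Δ m R : ℕ)
    (x : ℕ → ℕ)
    (hΔ : ∀ i : ℕ, 1 ≤ i → i ≤ a → Δ ≤ x i)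
    (hsum_hi : (∑ j ∈ Finset.Icc 1 a, x j) + R ≤ m + Δ)
    (hlow : ∀ i : ℕ, 1 ≤ i → i ≤ a →
      m ≤ (∑ j ∈ Finset.Icc 1 (i - 1), x j) + n * x i) :
    ∀ i : ℕ, 1 ≤ i → i ≤ a →
      ((m + Δ - ∑ j ∈ Finset.Icc 1 (i - 1), x j : ℝ)) / ((n : ℝ) + 1) ≤ (x i : ℝ) ∧
      (x i : ℝ) ≤ ((m + Δ - ∑ j ∈ Finset.Icc 1 (i - 1), x j : ℝ)) ∧
      ∀ C : ℕ, ∀ T : Set ℕ, LogSparse C T →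
        ((T ∩ {v : ℕ | ((m + Δ - ∑ j ∈ Finset.Icc 1 (i - 1), x j : ℝ)) / ((n : ℝ) + 1) ≤ (v : ℝ) ∧
            (v : ℝ) ≤ ((m + Δ - ∑ j ∈ Finset.Icc 1 (i - 1), x j : ℝ))}).ncard : ℝ)
          ≤ (C : ℝ) * (Real.logb 2 ((n : ℝ) + 1) + 1) := by
  intro i hi hia
  have hprefix : ((∑ j ∈ Icc 1 (i - 1), x j : ℕ) : ℝ) + x i ≤ m + Δ := by
    exact_mod_cast (sum_Icc_one_pred_add_le_sum_Icc_one x hi hia).trans (by omega)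
  have hlow_i : (m : ℝ) ≤ ((∑ j ∈ Icc 1 (i - 1), x j : ℕ) : ℝ) + n * x i := by
    exact_mod_cast hlow i hi hia
  have hΔ_i : (Δ : ℝ) ≤ x i := by exact_mod_cast hΔ i hi hia
  push_cast at hprefix hlow_i ⊢
  refine ⟨?_, by linarith, fun C T hT => ?_⟩
  · rw [div_le_iff₀ (by positivity)]
    linarith
  · exact hT.ncard_inter_Icc_div_le _ (le_add_of_nonneg_left n.cast_nonneg)

theorem large_terms_range (n a Δ m R : ℕ) (ha : a ≤ n)
    (x : ℕ → ℕ)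
    (hdec : ∀ i j : ℕ, 1 ≤ i → i ≤ j → j ≤ a → x j ≤ x i)
    (hΔ : ∀ i : ℕ, 1 ≤ i → i ≤ a → Δ ≤ x i)
    (hpos : ∀ i : ℕ, 1 ≤ i → i ≤ a → 0 < x i)
    (hsum_lo : m ≤ (∑ j ∈ Finset.Icc 1 a, x j) + R)
    (hsum_hi : (∑ j ∈ Finset.Icc 1 a, x j) + R ≤ m + Δ)
    (hlow : ∀ i : ℕ, 1 ≤ i → i ≤ a →
      m ≤ (∑ j ∈ Finset.Icc 1 (i - 1), x j) + n * x i) :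
    ∀ i : ℕ, 1 ≤ i → i ≤ a →
      ((m + Δ - ∑ j ∈ Finset.Icc 1 (i - 1), x j : ℝ)) / ((n : ℝ) + 1) ≤ (x i : ℝ) ∧
      (x i : ℝ) ≤ ((m + Δ - ∑ j ∈ Finset.Icc 1 (i - 1), x j : ℝ)) ∧
      ∀ C : ℕ, ∀ T : Set ℕ, LogSparse C T →
        ((T ∩ {v : ℕ | ((m + Δ - ∑ j ∈ Finset.Icc 1 (i - 1), x j : ℝ)) / ((n : ℝ) + 1) ≤ (v : ℝ) ∧
            (v : ℝ) ≤ ((m + Δ - ∑ j ∈ Finset.Icc 1 (i - 1), x j : ℝ))}).ncard : ℝ)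
          ≤ (C : ℝ) * (Real.logb 2 ((n : ℝ) + 1) + 1) :=
  large_terms_range_general n a Δ m R x hΔ hsum_hi hlow
end
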